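/- Let k be a field, A a k-algebra, and R ∈ A⊗A a unitary invertible solution of the pentagon equation, with P = P(A,R) and H = H(A,R) the Hopf algebras on R_(l) and R_(r). Then the k-linear map f : P* → H defined by f(p*) = Σ ⟨p*, R¹⟩R² is an isomorphism of Hopf algebras from the dual Hopf algebra P* onto H. -/

import Mathlib

/-!
Write `f(φ) = (φ ⊗ id)(R')`. The injective map `ι ⊗ ι ⊗ id` sends `(Δ_P ⊗ id)(R')` to
`(R¹²)⁻¹R²³R¹²` because `Δ_P = R⁻¹(1 ⊗ ·)R`, and this is `R¹³R²³` by the pentagon equation;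
hence `(Δ_P ⊗ id)(R') = R'¹³R'²³`. Slicing this with `φ ⊗ ψ` shows that `f` turns convolution
into multiplication, and then `f(ε) = 1` because `1 ∈ R_(r) = range f`. Lifted along
`ι ⊗ id ⊗ id`, the pentagon equation reads `R'¹²R'¹³ = R²³R'¹²(R²³)⁻¹`; slicing it with `φ ∘ m`
shows that `f` carries the dual of the multiplication of `P` to `Δ_H`. Finally `f` is injective
because every element of `P` is a left coefficient of `R'`, and its range is `R_(r)` because
`φ ↦ φ ∘ ι` maps `A*` onto `P*`.
-/

open TensorProduct

set_option maxHeartbeats 1000000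
set_option synthInstance.maxHeartbeats 200000

namespace PentagonPaper

section Pentagon

variable (k : Type*) [Field k] (A : Type*) [Ring A] [Algebra k A]

/-- `x ⊗ y ↦ x ⊗ y ⊗ 1` -/
noncomputable def leg12 : A ⊗[k] A →ₐ[k] A ⊗[k] (A ⊗[k] A) :=
  Algebra.TensorProduct.map (AlgHom.id k A) Algebra.TensorProduct.includeLeft

/-- `x ⊗ y ↦ x ⊗ 1 ⊗ y` -/
noncomputable def leg13 : A ⊗[k] A →ₐ[k] A ⊗[k] (A ⊗[k] A) :=
  Algebra.TensorProduct.map (AlgHom.id k A) Algebra.TensorProduct.includeRight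

/-- `x ⊗ y ↦ 1 ⊗ x ⊗ y` -/
noncomputable def leg23 : A ⊗[k] A →ₐ[k] A ⊗[k] (A ⊗[k] A) :=
  Algebra.TensorProduct.includeRight

variable {k A}

/-- The pentagon equation `R¹²R¹³R²³ = R²³R¹²`. -/
def IsPentagon (R : A ⊗[k] A) : Prop :=
  leg12 k A R * leg13 k A R * leg23 k A R = leg23 k A R * leg12 k A R

/-- `φ ↦ (id ⊗ φ)(R)`, i.e. the map sending a functional to the corresponding
left coefficient of `R`. -/
noncomputable def lCoefMap (R : A ⊗[k] A) : Module.Dual k A →ₗ[k] A :=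
  (TensorProduct.rid k A).toLinearMap ∘ₗ LinearMap.applyₗ R ∘ₗ LinearMap.lTensorHom A

/-- `φ ↦ (φ ⊗ id)(R)`, i.e. the map sending a functional to the corresponding
right coefficient of `R`. -/
noncomputable def rCoefMap (R : A ⊗[k] A) : Module.Dual k A →ₗ[k] A :=
  (TensorProduct.lid k A).toLinearMap ∘ₗ LinearMap.applyₗ R ∘ₗ LinearMap.rTensorHom A

/-- The space `R_(l)` of left coefficients of `R`. -/
noncomputable def lCoefs (R : A ⊗[k] A) : Submodule k A := LinearMap.range (lCoefMap R)

/-- The space `R_(r)` of right coefficients of `R`. -/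
noncomputable def rCoefs (R : A ⊗[k] A) : Submodule k A := LinearMap.range (rCoefMap R)

/-- `R` is unitary if `1 ∈ R_(l) ∩ R_(r)`. -/
def IsUnitary (R : A ⊗[k] A) : Prop := (1 : A) ∈ lCoefs R ∧ (1 : A) ∈ rCoefs R

/-- The length `l(R)`: the minimal `m` such that `R = ∑_{i=1}^m aᵢ ⊗ bᵢ`. -/
noncomputable def length (R : A ⊗[k] A) : ℕ :=
  sInf {m : ℕ | ∃ a b : Fin m → A, R = ∑ i, a i ⊗ₜ[k] b i}

/-- The left `R`-coinvariants `A^{R,l} = {a | R(a ⊗ 1) = a ⊗ 1}`. -/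
noncomputable def lCoinv (R : A ⊗[k] A) : Submodule k A where
  carrier := {a : A | R * (a ⊗ₜ[k] (1 : A)) = a ⊗ₜ[k] (1 : A)}
  add_mem' := by
    intro a b ha hb
    simp only [Set.mem_setOf_eq, TensorProduct.add_tmul, mul_add] at *
    rw [ha, hb]
  zero_mem' := by simp
  smul_mem' := by
    intro c a ha
    simp only [Set.mem_setOf_eq] at *
    rw [← TensorProduct.smul_tmul', mul_smul_comm, ha]

/-- The right `R`-coinvariants `A^{R,r} = {a | (1 ⊗ a)R = 1 ⊗ a}`. -/
noncomputable def rCoinv (R : A ⊗[k] A) : Submodule k A where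
  carrier := {a : A | ((1 : A) ⊗ₜ[k] a) * R = (1 : A) ⊗ₜ[k] a}
  add_mem' := by
    intro a b ha hb
    simp only [Set.mem_setOf_eq, TensorProduct.tmul_add, add_mul] at *
    rw [ha, hb]
  zero_mem' := by simp
  smul_mem' := by
    intro c a ha
    simp only [Set.mem_setOf_eq, TensorProduct.tmul_smul, smul_mul_assoc] at *
    rw [ha]

/-- The comultiplication `Δ_r : a ↦ R⁻¹(1 ⊗ a)R` on `A`. -/
noncomputable def deltaR (R : A ⊗[k] A) : A →ₗ[k] A ⊗[k] A where
  toFun a := Ring.inverse R * ((1 : A) ⊗ₜ[k] a) * R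
  map_add' a b := by simp [TensorProduct.tmul_add, mul_add, add_mul]
  map_smul' c a := by simp [TensorProduct.tmul_smul, mul_smul_comm, smul_mul_assoc]

/-- The comultiplication `Δ_l : a ↦ R(a ⊗ 1)R⁻¹` on `A`. -/
noncomputable def deltaL (R : A ⊗[k] A) : A →ₗ[k] A ⊗[k] A where
  toFun a := R * (a ⊗ₜ[k] (1 : A)) * Ring.inverse R
  map_add' a b := by simp [TensorProduct.add_tmul, mul_add, add_mul]
  map_smul' c a := by
    simp only [RingHom.id_apply]
    rw [← TensorProduct.smul_tmul', mul_smul_comm, smul_mul_assoc]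

end Pentagon

section Realizes

variable {k : Type*} [Field k] {A : Type*} [Ring A] [Algebra k A]
variable {L : Type*} [Ring L] [HopfAlgebra k L]

/-- `f` realizes the Hopf algebra `L` as the Hopf algebra
`P(A,R) = ` (`R_(l)`, multiplication of `A`, `Δ_r(x) = R⁻¹(1⊗x)R`):
`f` is an isomorphism of algebras from `L` onto the subalgebra `R_(l)` of `A`
transporting the comultiplication of `L` to `Δ_r`. -/
def RealizesP (R : A ⊗[k] A) (f : L →ₗ[k] A) : Prop :=
  Function.Injective f ∧ LinearMap.range f = lCoefs R ∧
    f 1 = 1 ∧ (∀ x y : L, f (x * y) = f x * f y) ∧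
    ∀ x : L, TensorProduct.map f f (Coalgebra.comul x) =
      Ring.inverse R * ((1 : A) ⊗ₜ[k] f x) * R

/-- `f` realizes the Hopf algebra `L` as the Hopf algebra
`H(A,R) = ` (`R_(r)`, multiplication of `A`, `Δ_l(y) = R(y⊗1)R⁻¹`). -/
def RealizesH (R : A ⊗[k] A) (f : L →ₗ[k] A) : Prop :=
  Function.Injective f ∧ LinearMap.range f = rCoefs R ∧
    f 1 = 1 ∧ (∀ x y : L, f (x * y) = f x * f y) ∧
    ∀ x : L, TensorProduct.map f f (Coalgebra.comul x) =
      R * (f x ⊗ₜ[k] (1 : A)) * Ring.inverse R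

end Realizes

section Convolution

variable (k : Type u) [Field k] (L : Type v) [Ring L] [HopfAlgebra k L]

/-- The convolution product on the dual of the coalgebra `L`, as a linear map
`L* ⊗ L* → L*`: `(f ∗ g)(l) = f(l₍₁₎)g(l₍₂₎)`. -/
noncomputable def convMul : Module.Dual k L ⊗[k] Module.Dual k L →ₗ[k] Module.Dual k L :=
  (Coalgebra.comul (R := k) (A := L)).dualMap ∘ₗ TensorProduct.dualDistrib k L L

end Convolution

section Eval

variable {k : Type u} [Field k] {P : Type v} [AddCommGroup P] [Module k P]
variable {A : Type w} [AddCommGroup A] [Module k A]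

/-- Given `R' ∈ P ⊗ A`, the map `p* ↦ (p* ⊗ id)(R') = ∑ ⟨p*, R'¹⟩ R'²`. -/
noncomputable def evalLeft (R' : P ⊗[k] A) : Module.Dual k P →ₗ[k] A :=
  (TensorProduct.lid k A).toLinearMap ∘ₗ LinearMap.applyₗ R' ∘ₗ LinearMap.rTensorHom A

end Eval

section Slices

variable {k : Type*} [Field k] {M N M' : Type*} [AddCommGroup M] [Module k M]
  [AddCommGroup N] [Module k N] [AddCommGroup M'] [Module k M']

/-- `ψ ↦ (id ⊗ ψ)(x)` -/
noncomputable def evalRight (x : M ⊗[k] N) : Module.Dual k N →ₗ[k] M :=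
  (TensorProduct.rid k M).toLinearMap ∘ₗ LinearMap.applyₗ x ∘ₗ LinearMap.lTensorHom M

lemma evalLeft_apply (x : M ⊗[k] N) (φ : Module.Dual k M) :
    evalLeft x φ = TensorProduct.lid k N (φ.rTensor N x) := rfl

lemma evalRight_apply (x : M ⊗[k] N) (ψ : Module.Dual k N) :
    evalRight x ψ = TensorProduct.rid k M (ψ.lTensor M x) := rfl

lemma rCoefMap_eq_evalLeft {A : Type*} [Ring A] [Algebra k A] (R : A ⊗[k] A) :
    rCoefMap R = evalLeft R := rfl

lemma lCoefMap_eq_evalRight {A : Type*} [Ring A] [Algebra k A] (R : A ⊗[k] A) :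
    lCoefMap R = evalRight R := rfl

@[simp] lemma evalLeft_tmul (m : M) (n : N) (φ : Module.Dual k M) :
    evalLeft (m ⊗ₜ[k] n) φ = φ m • n := by
  simp [evalLeft_apply]

@[simp] lemma evalLeft_add (x y : M ⊗[k] N) (φ : Module.Dual k M) :
    evalLeft (x + y) φ = evalLeft x φ + evalLeft y φ := by
  simp [evalLeft_apply]

@[simp] lemma evalLeft_zero (φ : Module.Dual k M) : evalLeft (0 : M ⊗[k] N) φ = 0 := by
  simp [evalLeft_apply]

lemma apply_evalLeft (x : M ⊗[k] N) (φ : Module.Dual k M) (ψ : Module.Dual k N) :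
    ψ (evalLeft x φ) = φ (evalRight x ψ) := by
  induction x using TensorProduct.induction_on with
  | zero => simp [evalRight_apply]
  | tmul m n => simp [evalRight_apply, mul_comm]
  | add x y hx hy => simp_all [evalRight_apply]

lemma evalLeft_rTensor (f : M →ₗ[k] M') (x : M ⊗[k] N) (φ : Module.Dual k M') :
    evalLeft (f.rTensor N x) φ = evalLeft x (φ ∘ₗ f) := by
  simp [evalLeft_apply, ← LinearMap.rTensor_comp_apply]

lemma evalRight_rTensor (f : M →ₗ[k] M') (x : M ⊗[k] N) (ψ : Module.Dual k N) :
    evalRight (f.rTensor N x) ψ = f (evalRight x ψ) := by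
  induction x using TensorProduct.induction_on with
  | zero => simp [evalRight_apply]
  | tmul m n => simp [evalRight_apply]
  | add x y hx hy => simp_all [evalRight_apply]

lemma evalLeft_injective {x : M ⊗[k] N} (hx : Function.Surjective (evalRight x)) :
    Function.Injective (evalLeft x) := by
  intro φ φ' h
  ext m
  obtain ⟨ψ, rfl⟩ := hx m
  rw [← apply_evalLeft, ← apply_evalLeft, h]

lemma evalRight_surjective_of_rTensor {f : M →ₗ[k] M'} (hf : Function.Injective f)
    {x : M ⊗[k] N} (hx : LinearMap.range f ≤ LinearMap.range (evalRight (f.rTensor N x))) :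
    Function.Surjective (evalRight x) := by
  intro m
  obtain ⟨ψ, hψ⟩ := hx ⟨m, rfl⟩
  exact ⟨ψ, hf (by rw [← evalRight_rTensor, hψ])⟩

lemma range_evalLeft_rTensor {f : M →ₗ[k] M'} (hf : Function.Injective f) (x : M ⊗[k] N) :
    LinearMap.range (evalLeft (f.rTensor N x)) = LinearMap.range (evalLeft x) := by
  have : evalLeft (f.rTensor N x) = evalLeft x ∘ₗ f.dualMap := by
    ext φ
    exact evalLeft_rTensor f x φ
  rw [this, LinearMap.range_comp_of_range_eq_top]
  exact LinearMap.range_eq_top.mpr (LinearMap.dualMap_surjective_of_injective hf)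

end Slices

section Legs

open Algebra.TensorProduct

variable {k : Type*} [CommSemiring k] {B C D B' : Type*} [Semiring B] [Algebra k B]
  [Semiring C] [Algebra k C] [Semiring D] [Algebra k D] [Semiring B'] [Algebra k B']

-- `leg13L x, leg23L x` are the legs `x¹³, x²³` in `(B ⊗ C) ⊗ D`, and
-- `leg12R x, leg13R x` are `x¹², x¹³` in `B ⊗ (C ⊗ D)`.
noncomputable def leg13L : B ⊗[k] D →ₐ[k] (B ⊗[k] C) ⊗[k] D := map includeLeft (AlgHom.id k D)

noncomputable def leg23L : C ⊗[k] D →ₐ[k] (B ⊗[k] C) ⊗[k] D := map includeRight (AlgHom.id k D)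

noncomputable def leg12R : B ⊗[k] C →ₐ[k] B ⊗[k] (C ⊗[k] D) := map (AlgHom.id k B) includeLeft

noncomputable def leg13R : B ⊗[k] D →ₐ[k] B ⊗[k] (C ⊗[k] D) := map (AlgHom.id k B) includeRight

@[simp] lemma leg13L_tmul (b : B) (d : D) :
    (leg13L (b ⊗ₜ d) : (B ⊗[k] C) ⊗[k] D) = (b ⊗ₜ 1) ⊗ₜ d := rfl

@[simp] lemma leg23L_tmul (c : C) (d : D) :
    (leg23L (c ⊗ₜ d) : (B ⊗[k] C) ⊗[k] D) = (1 ⊗ₜ c) ⊗ₜ d := rfl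

@[simp] lemma leg12R_tmul (b : B) (c : C) :
    (leg12R (b ⊗ₜ c) : B ⊗[k] (C ⊗[k] D)) = b ⊗ₜ (c ⊗ₜ 1) := rfl

@[simp] lemma leg13R_tmul (b : B) (d : D) :
    (leg13R (b ⊗ₜ d) : B ⊗[k] (C ⊗[k] D)) = b ⊗ₜ (1 ⊗ₜ d) := rfl

lemma map_leg13L (f : B →ₐ[k] B') (x : B ⊗[k] D) :
    map (map f f) (AlgHom.id k D) (leg13L x) = leg13L (map f (AlgHom.id k D) x) := by
  induction x using TensorProduct.induction_on with
  | zero => simp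
  | tmul b d => simp
  | add x y hx hy => simp_all

lemma map_leg23L (f : B →ₐ[k] B') (x : B ⊗[k] D) :
    map (map f f) (AlgHom.id k D) (leg23L x) = leg23L (map f (AlgHom.id k D) x) := by
  induction x using TensorProduct.induction_on with
  | zero => simp
  | tmul b d => simp
  | add x y hx hy => simp_all

lemma map_leg12R (f : B →ₐ[k] B') (x : B ⊗[k] C) :
    map f (AlgHom.id k (C ⊗[k] D)) (leg12R x) = leg12R (map f (AlgHom.id k C) x) := by
  induction x using TensorProduct.induction_on with
  | zero => simp
  | tmul b c => simp
  | add x y hx hy => simp_all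

lemma map_leg13R (f : B →ₐ[k] B') (x : B ⊗[k] D) :
    map f (AlgHom.id k (C ⊗[k] D)) (leg13R x) = leg13R (map f (AlgHom.id k D) x) := by
  induction x using TensorProduct.induction_on with
  | zero => simp
  | tmul b d => simp
  | add x y hx hy => simp_all

end Legs

section PentagonLifts

open Algebra.TensorProduct

variable {k : Type*} [Field k] {A : Type*} [Ring A] [Algebra k A]

lemma algTensorMap_injective {B C B' C' : Type*} [Ring B] [Ring C] [Ring B'] [Ring C']
    [Algebra k B] [Algebra k C] [Algebra k B'] [Algebra k C'] {f : B →ₐ[k] B'} {g : C →ₐ[k] C'}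
    (hf : Function.Injective f) (hg : Function.Injective g) :
    Function.Injective (Algebra.TensorProduct.map f g) :=
  TensorProduct.map_injective_of_flat_flat f.toLinearMap g.toLinearMap hf hg

lemma assoc_includeLeft (x : A ⊗[k] A) :
    Algebra.TensorProduct.assoc k k k A A A (includeLeft (S := k) x) = leg12 k A x := by
  induction x using TensorProduct.induction_on with
  | zero => simp
  | tmul a b => rfl
  | add x y hx hy => rw [map_add, map_add, map_add, hx, hy]

lemma assoc_leg13L (x : A ⊗[k] A) :
    Algebra.TensorProduct.assoc k k k A A A (leg13L x) = leg13 k A x := by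
  induction x using TensorProduct.induction_on with
  | zero => simp
  | tmul a b => rfl
  | add x y hx hy => simp_all

lemma assoc_leg23L (x : A ⊗[k] A) :
    Algebra.TensorProduct.assoc k k k A A A (leg23L x) = leg23 k A x := by
  induction x using TensorProduct.induction_on with
  | zero => simp
  | tmul a b => rfl
  | add x y hx hy => simp_all

lemma IsPentagon.leg13L_mul_leg23L {R : A ⊗[k] A} (hR : IsPentagon R) :
    includeLeft (S := k) R * leg13L R * leg23L R =
      (leg23L R * includeLeft (S := k) R : (A ⊗[k] A) ⊗[k] A) := by
  apply (Algebra.TensorProduct.assoc k k k A A A).injective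
  simp only [map_mul, assoc_includeLeft, assoc_leg13L, assoc_leg23L]
  exact hR

variable {P : Type*} [Ring P] [Algebra k P]

lemma IsPentagon.leg12R_mul_leg13R {R : A ⊗[k] A} (hR : IsPentagon R) {ι : P →ₐ[k] A}
    (hι : Function.Injective ι) {R' : P ⊗[k] A}
    (hR' : Algebra.TensorProduct.map ι (AlgHom.id k A) R' = R) :
    leg12R R' * leg13R R' * includeRight R =
      (includeRight R * leg12R R' : P ⊗[k] (A ⊗[k] A)) := by
  apply algTensorMap_injective hι (g := AlgHom.id k (A ⊗[k] A)) Function.injective_id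
  simp only [map_mul, map_leg12R, map_leg13R, hR', Algebra.TensorProduct.map_tmul,
    includeRight_apply, map_one, AlgHom.id_apply]
  exact hR

end PentagonLifts

section Slicing

open Algebra.TensorProduct

variable {k : Type*} [Field k] {A : Type*} [Ring A] [Algebra k A] {P : Type*} [Ring P]
  [Algebra k P]

lemma evalLeft_leg13L_mul_leg23L (x y : P ⊗[k] A) (φ ψ : Module.Dual k P) :
    evalLeft (leg13L x * leg23L y) (TensorProduct.dualDistrib k P P (φ ⊗ₜ ψ)) =
      evalLeft x φ * evalLeft y ψ := by
  induction x using TensorProduct.induction_on with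
  | zero => simp
  | tmul p a =>
    induction y using TensorProduct.induction_on with
    | zero => simp
    | tmul q b =>
      simp [tmul_mul_tmul, TensorProduct.dualDistrib_apply, smul_smul, mul_comm]
    | add y y' hy hy' => simp only [map_add, mul_add, evalLeft_add, hy, hy']
  | add x x' hx hx' => simp only [map_add, add_mul, evalLeft_add, hx, hx']

lemma evalLeft_includeRight_mul_mul (S T : A ⊗[k] A) (z : P ⊗[k] (A ⊗[k] A))
    (φ : Module.Dual k P) :
    evalLeft (includeRight S * z * includeRight T) φ = S * evalLeft z φ * T := by
  induction z using TensorProduct.induction_on with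
  | zero => simp
  | tmul p u => simp [tmul_mul_tmul]
  | add z z' hz hz' => simp only [mul_add, add_mul, evalLeft_add, hz, hz']

lemma evalLeft_leg12R (x : P ⊗[k] A) (φ : Module.Dual k P) :
    evalLeft (leg12R x : P ⊗[k] (A ⊗[k] A)) φ = evalLeft x φ ⊗ₜ 1 := by
  induction x using TensorProduct.induction_on with
  | zero => simp
  | tmul p a => simp [TensorProduct.smul_tmul']
  | add x x' hx hx' => simp [TensorProduct.add_tmul, hx, hx']

lemma evalLeft_leg12R_mul_leg13R (x y : P ⊗[k] A) (φ : Module.Dual k P) :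
    evalLeft (leg12R x * leg13R y) φ =
      evalLeft (TensorProduct.tensorTensorTensorComm k P A P A (x ⊗ₜ y))
        (φ ∘ₗ LinearMap.mul' k P) := by
  induction x using TensorProduct.induction_on with
  | zero => simp [TensorProduct.zero_tmul]
  | tmul p a =>
    induction y using TensorProduct.induction_on with
    | zero => simp [TensorProduct.tmul_zero]
    | tmul q b => simp [tmul_mul_tmul]
    | add y y' hy hy' =>
      simp only [map_add, mul_add, TensorProduct.tmul_add, evalLeft_add, hy, hy']
  | add x x' hx hx' =>
    simp only [map_add, add_mul, TensorProduct.add_tmul, evalLeft_add, hx, hx']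

lemma map_evalLeft_evalLeft (x y : P ⊗[k] A) (c : Module.Dual k P ⊗[k] Module.Dual k P) :
    TensorProduct.map (evalLeft x) (evalLeft y) c =
      evalLeft (TensorProduct.tensorTensorTensorComm k P A P A (x ⊗ₜ y))
        (TensorProduct.dualDistrib k P P c) := by
  induction c using TensorProduct.induction_on with
  | zero => simp
  | tmul φ ψ =>
    rw [TensorProduct.map_tmul]
    induction x using TensorProduct.induction_on with
    | zero => simp [TensorProduct.zero_tmul]
    | tmul p a =>
      induction y using TensorProduct.induction_on with
      | zero => simp [TensorProduct.tmul_zero]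
      | tmul q b =>
        simp [TensorProduct.dualDistrib_apply, TensorProduct.smul_tmul', smul_smul, mul_comm]
      | add y y' hy hy' =>
        simp only [map_add, TensorProduct.tmul_add, evalLeft_add, hy, hy']
    | add x x' hx hx' =>
      simp only [map_add, TensorProduct.add_tmul, evalLeft_add, hx, hx']
  | add c c' hc hc' => simp [hc, hc']

end Slicing

section Comultiplication

open Algebra.TensorProduct

variable {k : Type*} [Field k] {A : Type*} [Ring A] [Algebra k A] {P : Type*} [Ring P]
  [Bialgebra k P] {R : A ⊗[k] A} {ι : P →ₐ[k] A}

lemma map_map_rTensor_comul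
    (hΔ : ∀ p : P, TensorProduct.map ι.toLinearMap ι.toLinearMap (Coalgebra.comul p) =
      Ring.inverse R * (1 ⊗ₜ ι p) * R) (x : P ⊗[k] A) :
    Algebra.TensorProduct.map (Algebra.TensorProduct.map ι ι) (AlgHom.id k A)
        ((Coalgebra.comul (R := k) (A := P)).rTensor A x) =
      includeLeft (S := k) (Ring.inverse R) *
        leg23L (Algebra.TensorProduct.map ι (AlgHom.id k A) x) * includeLeft (S := k) R := by
  induction x using TensorProduct.induction_on with
  | zero => simp
  | tmul p a =>
    have : Algebra.TensorProduct.map ι ι (Coalgebra.comul (R := k) p) =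
        TensorProduct.map ι.toLinearMap ι.toLinearMap (Coalgebra.comul p) := rfl
    simp [this, hΔ, tmul_mul_tmul]
  | add x y hx hy => simp [mul_add, add_mul, hx, hy]

lemma rTensor_comul_eq_leg13L_mul_leg23L (hR : IsUnit R) (hpent : IsPentagon R)
    (hι : Function.Injective ι)
    (hΔ : ∀ p : P, TensorProduct.map ι.toLinearMap ι.toLinearMap (Coalgebra.comul p) =
      Ring.inverse R * (1 ⊗ₜ ι p) * R)
    {R' : P ⊗[k] A} (hR' : Algebra.TensorProduct.map ι (AlgHom.id k A) R' = R) :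
    (Coalgebra.comul (R := k) (A := P)).rTensor A R' = leg13L R' * leg23L R' := by
  apply algTensorMap_injective (algTensorMap_injective hι hι) (g := AlgHom.id k A)
    Function.injective_id
  rw [map_map_rTensor_comul hΔ, map_mul, map_leg13L, map_leg23L, hR', mul_assoc,
    ← hpent.leg13L_mul_leg23L]
  simp only [← mul_assoc, ← map_mul, Ring.inverse_mul_cancel _ hR, map_one, one_mul]

end Comultiplication

section ConvolutionAlgebra

variable {k : Type*} [Field k] {P : Type*} [Ring P] [HopfAlgebra k P]
  {A : Type*} [Ring A] [Algebra k A]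

lemma convMul_counit_tmul (φ : Module.Dual k P) :
    convMul k P (Coalgebra.counit ⊗ₜ φ) = φ := by
  have : TensorProduct.dualDistrib k P P (Coalgebra.counit ⊗ₜ φ) =
      φ ∘ₗ (TensorProduct.lid k P).toLinearMap ∘ₗ (Coalgebra.counit (R := k) (A := P)).rTensor P :=
    TensorProduct.ext' fun p q => by simp [TensorProduct.dualDistrib_apply]
  ext p
  simp [convMul, this, Coalgebra.rTensor_counit_comul]

lemma map_counit_eq_one {f : Module.Dual k P →ₗ[k] A}
    (hf : ∀ φ ψ, f (convMul k P (φ ⊗ₜ ψ)) = f φ * f ψ) (h1 : (1 : A) ∈ LinearMap.range f) :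
    f Coalgebra.counit = 1 := by
  obtain ⟨φ, hφ⟩ := h1
  calc f Coalgebra.counit = f Coalgebra.counit * f φ := by rw [hφ, mul_one]
    _ = f (convMul k P (Coalgebra.counit ⊗ₜ φ)) := (hf _ _).symm
    _ = 1 := by rw [convMul_counit_tmul, hφ]

lemma evalLeft_convMul {R' : P ⊗[k] A}
    (hR' : (Coalgebra.comul (R := k) (A := P)).rTensor A R' = leg13L R' * leg23L R')
    (φ ψ : Module.Dual k P) :
    evalLeft R' (convMul k P (φ ⊗ₜ ψ)) = evalLeft R' φ * evalLeft R' ψ := by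
  rw [convMul, LinearMap.comp_apply, LinearMap.dualMap_apply', ← evalLeft_rTensor, hR',
    evalLeft_leg13L_mul_leg23L]

end ConvolutionAlgebra

open Algebra.TensorProduct in
lemma map_evalLeft_evalLeft_of_dualDistrib_eq {k : Type*} [Field k] {A : Type*} [Ring A]
    [Algebra k A] {P : Type*} [Ring P] [Algebra k P] {R : A ⊗[k] A} (hR : IsUnit R)
    (hpent : IsPentagon R) {ι : P →ₐ[k] A} (hι : Function.Injective ι) {R' : P ⊗[k] A}
    (hR' : Algebra.TensorProduct.map ι (AlgHom.id k A) R' = R) {φ : Module.Dual k P}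
    {c : Module.Dual k P ⊗[k] Module.Dual k P}
    (hc : TensorProduct.dualDistrib k P P c = φ ∘ₗ LinearMap.mul' k P) :
    TensorProduct.map (evalLeft R') (evalLeft R') c =
      R * (evalLeft R' φ ⊗ₜ 1) * Ring.inverse R := by
  have hconj : leg12R R' * leg13R R' =
      includeRight R * leg12R R' * includeRight (Ring.inverse R) := by
    rw [← hpent.leg12R_mul_leg13R hι hR', mul_assoc, ← map_mul, Ring.mul_inverse_cancel _ hR,
      map_one, mul_one]
  rw [map_evalLeft_evalLeft, hc, ← evalLeft_leg12R_mul_leg13R, hconj,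
    evalLeft_includeRight_mul_mul, evalLeft_leg12R]

theorem dual_of_P_is_H_general
    {k : Type u} [Field k] {A : Type v} [Ring A] [Algebra k A]
    {P : Type w} [Ring P] [HopfAlgebra k P]
    (R : A ⊗[k] A) (hinv : IsUnit R) (hpent : IsPentagon R) (huni : IsUnitary R)
    (iota : P →ₗ[k] A) (hiota : RealizesP R iota)
    (R' : P ⊗[k] A) (hR' : TensorProduct.map iota LinearMap.id R' = R) :
    Function.Injective (evalLeft R') ∧
    LinearMap.range (evalLeft R') = rCoefs R ∧
    evalLeft R' (Coalgebra.counit (R := k) (A := P)) = 1 ∧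
    (∀ pd qd : Module.Dual k P,
      evalLeft R' (convMul k P (pd ⊗ₜ[k] qd)) = evalLeft R' pd * evalLeft R' qd) ∧
    (∀ (pd : Module.Dual k P) (c : Module.Dual k P ⊗[k] Module.Dual k P),
      TensorProduct.dualDistrib k P P c = pd ∘ₗ LinearMap.mul' k P →
      TensorProduct.map (evalLeft R') (evalLeft R') c =
        R * (evalLeft R' pd ⊗ₜ[k] (1 : A)) * Ring.inverse R) := by
  obtain ⟨hinj, hrange, hone, hmul, hΔ⟩ := hiota
  let ι : P →ₐ[k] A := AlgHom.ofLinearMap iota hone hmul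
  have hR'ι : Algebra.TensorProduct.map ι (AlgHom.id k A) R' = R := hR'
  have hrTensor : iota.rTensor A R' = R := hR'
  have hcomul := rTensor_comul_eq_leg13L_mul_leg23L hinv hpent (ι := ι) hinj hΔ hR'ι
  have hconv := evalLeft_convMul hcomul
  have hrangeH : LinearMap.range (evalLeft R') = rCoefs R := by
    rw [← range_evalLeft_rTensor hinj, hrTensor, rCoefs, rCoefMap_eq_evalLeft]
  have hsurj : Function.Surjective (evalRight R') := by
    refine evalRight_surjective_of_rTensor hinj ?_
    rw [hrTensor, ← lCoefMap_eq_evalRight, ← lCoefs, hrange]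
  refine ⟨evalLeft_injective hsurj, hrangeH, map_counit_eq_one hconv (hrangeH ▸ huni.2), hconv, ?_⟩
  intro pd c hc
  exact map_evalLeft_evalLeft_of_dualDistrib_eq hinv hpent hinj hR'ι hc

/-- **Statement 6.** Let `R ∈ A ⊗ A` be a unitary invertible solution of the pentagon
equation, `P` an abstract copy of the Hopf algebra `P(A,R)` (realized inside `A` by `ι`, with
`R' ∈ P ⊗ A` the lift of `R` along `ι ⊗ id`).  Then the map `f : P* → H`,
`f(p*) = ∑ ⟨p*, R¹⟩R²`, is an isomorphism of Hopf algebras from the dual Hopf algebra `P*`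
(convolution algebra, comultiplication dual to the multiplication of `P`) onto
`H = H(A,R) = R_(r)` (with the multiplication of `A` and comultiplication
`Δ_H(y) = R(y⊗1)R⁻¹`). -/
theorem dual_of_P_is_H
    {k : Type u} [Field k] {A : Type v} [Ring A] [Algebra k A]
    {P : Type w} [Ring P] [HopfAlgebra k P] [FiniteDimensional k P]
    (R : A ⊗[k] A) (hinv : IsUnit R) (hpent : IsPentagon R) (huni : IsUnitary R)
    (iota : P →ₗ[k] A) (hiota : RealizesP R iota)
    (R' : P ⊗[k] A) (hR' : TensorProduct.map iota LinearMap.id R' = R) :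
    Function.Injective (evalLeft R') ∧
    LinearMap.range (evalLeft R') = rCoefs R ∧
    evalLeft R' (Coalgebra.counit (R := k) (A := P)) = 1 ∧
    (∀ pd qd : Module.Dual k P,
      evalLeft R' (convMul k P (pd ⊗ₜ[k] qd)) = evalLeft R' pd * evalLeft R' qd) ∧
    (∀ (pd : Module.Dual k P) (c : Module.Dual k P ⊗[k] Module.Dual k P),
      TensorProduct.dualDistrib k P P c = pd ∘ₗ LinearMap.mul' k P →
      TensorProduct.map (evalLeft R') (evalLeft R') c =
        R * (evalLeft R' pd ⊗ₜ[k] (1 : A)) * Ring.inverse R) :=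
  dual_of_P_is_H_general R hinv hpent huni iota hiota R' hR'

end PentagonPaper
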